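/- Let P be a finite poset, v ∈ P, and let (x₁, …, x_k) be a linear extension of the subposet {x ∈ P : x < v}. Define η_v = T_{x₁} ∘ T_{x₂} ∘ ⋯ ∘ T_{x_k} and τ_v* = η_v ∘ T_v ∘ η_v⁻¹. Then Θ ∘ Δ⁻¹ ∘ τ_v = τ_v* ∘ Θ ∘ Δ⁻¹ as maps on positive labelings of P. -/

import Mathlib

/-!
Birational (commutative) antichain/order rowmotion on a finite poset `P`, with labels in `ℝ`
and positive labelings, following Joseph–Roby, "Birational and noncommutative lifts of
antichain toggling and rowmotion".
-/

open Finset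

attribute [local instance] Classical.propDecidable

variable {P : Type*} [Fintype P] [PartialOrder P]

/-- `c` is a saturated chain in `P`: consecutive entries are covers. -/
def SatChain {P : Type*} [PartialOrder P] {k : ℕ} (c : Fin (k + 1) → P) : Prop :=
  ∀ i : Fin k, c i.castSucc ⋖ c i.succ

/-- `c` is a maximal chain of `P`: a saturated chain from a minimal element to a maximal
element of `P` (equivalently, the restriction to `P` of a maximal chain
`0̂ ⋖ y₁ ⋖ ⋯ ⋖ y_k ⋖ 1̂` of `P̂`). -/
def MaxChain {P : Type*} [PartialOrder P] {k : ℕ} (c : Fin (k + 1) → P) : Prop :=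
  SatChain c ∧ IsMin (c 0) ∧ IsMax (c (Fin.last k))

/-- `Υ_v(g)`: the sum over all maximal chains `(y₁, …, y_k)` of `P` through `v` of the
products `g(y₁)⋯g(y_k)` of the labels along the chain. -/
noncomputable def Upsilon (g : P → ℝ) (v : P) : ℝ :=
  ∑ k ∈ range (Fintype.card P),
    ∑ c ∈ univ.filter (fun c : Fin (k + 1) → P => MaxChain c ∧ ∃ j, c j = v),
      (List.ofFn (g ∘ c)).prod

/-- The birational antichain toggle `τ_v`: it replaces the label at `v` by `C / Υ_v(g)` and
fixes all other labels. -/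
noncomputable def atog (C : ℝ) (v : P) (g : P → ℝ) : P → ℝ :=
  fun x => if x = v then C / Upsilon g v else g x

/-- `∑_{y ∈ P̂, y ⋖ x} f(y)`, with the convention `f(0̂) = 1` (the unique lower cover in
`P̂` of a minimal element of `P` is `0̂`). -/
noncomputable def lowSum (f : P → ℝ) (x : P) : ℝ :=
  (if IsMin x then 1 else 0) + ∑ y ∈ univ.filter (fun y => y ⋖ x), f y

/-- `∑_{y ∈ P̂, y ⋗ x} 1/f(y)`, with the convention `f(1̂) = C`. -/
noncomputable def upInvSum (C : ℝ) (f : P → ℝ) (x : P) : ℝ :=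
  (if IsMax x then 1 / C else 0) + ∑ y ∈ univ.filter (fun y => x ⋖ y), 1 / f y

/-- The birational order toggle `T_v`: it replaces the label at `v` by
`(∑_{y ∈ P̂, y ⋖ v} f(y)) / (f(v) · ∑_{y ∈ P̂, y ⋗ v} 1/f(y))` (with `f(0̂) = 1`,
`f(1̂) = C`) and fixes all other labels. -/
noncomputable def otog (C : ℝ) (v : P) (f : P → ℝ) : P → ℝ :=
  fun x => if x = v then lowSum f v / (f v * upInvSum C f v) else f x

/-- The birational complement map `Θ`: `(Θf)(x) = C / f(x)`. -/
noncomputable def thetaMap (C : ℝ) (f : P → ℝ) : P → ℝ := fun x => C / f x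

/-- The birational down transfer `∇`: `(∇f)(x) = f(x) / ∑_{y ∈ P̂, y ⋖ x} f(y)` with
`f(0̂) = 1`. -/
noncomputable def nablaMap (f : P → ℝ) : P → ℝ := fun x => f x / lowSum f x

/-- The birational inverse up transfer `Δ⁻¹`: `(Δ⁻¹f)(x)` is the sum, over all saturated
chains `x = y₁ ⋖ y₂ ⋖ ⋯ ⋖ y_k ⋖ 1̂` in `P̂` (i.e. saturated chains of `P` starting at `x`
and ending at a maximal element of `P`), of `f(y₁)f(y₂)⋯f(y_k)`. -/
noncomputable def deltaInvMap (f : P → ℝ) : P → ℝ := fun x =>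
  ∑ k ∈ range (Fintype.card P),
    ∑ c ∈ univ.filter (fun c : Fin (k + 1) → P =>
        SatChain c ∧ c 0 = x ∧ IsMax (c (Fin.last k))),
      (List.ofFn (f ∘ c)).prod

/-- `l` is a linear extension of `P`: it lists every element of `P` exactly once, and
`l[i] < l[j]` in `P` implies `i < j`. -/
def IsLinearExtension {P : Type*} [PartialOrder P] (l : List P) : Prop :=
  l.Nodup ∧ (∀ x : P, x ∈ l) ∧
    ∀ (i j : ℕ) (hi : i < l.length) (hj : j < l.length), l[i]'hi < l[j]'hj → i < j

/-- `l` is a linear extension of the subposet `A` of `P`. -/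
def IsLinearExtensionOn {P : Type*} [PartialOrder P] (A : Set P) (l : List P) : Prop :=
  l.Nodup ∧ (∀ x : P, x ∈ l ↔ x ∈ A) ∧
    ∀ (i j : ℕ) (hi : i < l.length) (hj : j < l.length), l[i]'hi < l[j]'hj → i < j

/-- Apply the antichain toggles `τ` along the list `l`, first element of `l` first; for a
linear extension `l = (x₁,…,xₙ)` this is `τ_{xₙ} ∘ ⋯ ∘ τ_{x₂} ∘ τ_{x₁}`, i.e. birational
antichain rowmotion `BAR`. -/
noncomputable def applyATogs (C : ℝ) (l : List P) (g : P → ℝ) : P → ℝ :=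
  l.foldl (fun h v => atog C v h) g

/-- Apply the order toggles `T` along the list `l`, first element of `l` first. -/
noncomputable def applyOTogs (C : ℝ) (l : List P) (f : P → ℝ) : P → ℝ :=
  l.foldl (fun h v => otog C v h) f

/-- `rk` is a rank function exhibiting `P` as a graded poset of rank `r`: minimal elements
have rank `0`, ranks increase by `1` along covers, and maximal elements have rank `r`. -/
def IsRankFunction {P : Type*} [PartialOrder P] (rk : P → ℕ) (r : ℕ) : Prop :=
  (∀ x : P, IsMin x → rk x = 0) ∧ (∀ x y : P, x ⋖ y → rk y = rk x + 1) ∧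
    (∀ x : P, IsMax x → rk x = r)

/-!
Write `F = Δ⁻¹ g` and `G = ∇⁻¹ g` for the sums of label products over saturated chains from `x`
up to `1̂` and from `0̂` up to `x`. Cutting a maximal chain at `v` gives
`Υ_v(g) · g(v) = G(v) · F(v)`, hence `(Δ⁻¹ τ_v g)(v) = C / G(v)`, while `Δ⁻¹ τ_v g = F` at every
`x ≰ v`.

Toggling at `a` sends the label `C / F(a)` to `G(a)` (and back) as soon as the lower covers of `a`
carry `G` and its upper covers carry `C / F`: both sums in `T_a` then collapse through the
recursions `G(a) = g(a) (δ_min + Σ_{y ⋖ a} G(y))` and `F(a) = g(a) (δ_max + Σ_{a ⋖ y} F(y))`.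
So `η_v⁻¹` turns `Θ Δ⁻¹ g` into `G` below `v` and `C / F` elsewhere, `T_v` then puts
`G(v) = C / (Δ⁻¹ τ_v g)(v)` at `v`, and `η_v` undoes the toggles below `v`, where `τ_v g = g`,
ending at `Θ Δ⁻¹ τ_v g`.
-/

namespace SatChain

omit [Fintype P] in
theorem strictMono {k : ℕ} {c : Fin (k + 1) → P} (hc : SatChain c) : StrictMono c :=
  Fin.strictMono_iff_lt_succ.2 fun i => (hc i).lt

omit [Fintype P] in
theorem cons_iff {k : ℕ} {x : P} {d : Fin (k + 1) → P} :
    SatChain (Fin.cons x d : Fin (k + 2) → P) ↔ x ⋖ d 0 ∧ SatChain d := by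
  simp only [SatChain, Fin.forall_fin_succ, Fin.castSucc_zero, Fin.cons_zero, ← Fin.succ_castSucc,
    Fin.cons_succ]

end SatChain

noncomputable def chainSum (f : P → ℝ) (k : ℕ) (p : (Fin (k + 1) → P) → Prop) : ℝ :=
  ∑ c ∈ univ.filter (fun c => SatChain c ∧ p c), (List.ofFn (f ∘ c)).prod

theorem chainSum_congr_pred {f : P → ℝ} {k : ℕ} {p q : (Fin (k + 1) → P) → Prop}
    (h : ∀ c, SatChain c → (p c ↔ q c)) : chainSum f k p = chainSum f k q := by
  unfold chainSum
  exact sum_congr (filter_congr fun c _ => and_congr_right (h c)) fun _ _ => rfl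

theorem chainSum_eq_zero_of_forall_not {f : P → ℝ} {k : ℕ} {p : (Fin (k + 1) → P) → Prop}
    (h : ∀ c, SatChain c → ¬ p c) : chainSum f k p = 0 :=
  sum_eq_zero fun c hc => absurd (mem_filter.1 hc).2.2 (h c (mem_filter.1 hc).2.1)

theorem chainSum_eq_zero_of_card_le (f : P → ℝ) {k : ℕ} (p : (Fin (k + 1) → P) → Prop)
    (hk : Fintype.card P ≤ k) : chainSum f k p = 0 :=
  chainSum_eq_zero_of_forall_not fun c hc _ => by
    have := Fintype.card_le_of_injective c hc.strictMono.injective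
    rw [Fintype.card_fin] at this
    omega

theorem chainSum_zero (f : P → ℝ) (p : (Fin 1 → P) → Prop) :
    chainSum f 0 p = ∑ x ∈ univ.filter (fun x => p fun _ => x), f x := by
  unfold chainSum
  simp only [sum_filter]
  rw [← (Equiv.funUnique (Fin 1) P).symm.sum_comp]
  refine sum_congr rfl fun x _ => ?_
  simp only [SatChain, Equiv.funUnique_symm_apply, IsEmpty.forall_iff, true_and, List.ofFn_succ,
    List.ofFn_zero, List.prod_cons, List.prod_nil, mul_one, Function.comp_apply]
  rfl

theorem chainSum_succ (f : P → ℝ) (k : ℕ) (p : (Fin (k + 2) → P) → Prop) :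
    chainSum f (k + 1) p
      = ∑ x, f x * chainSum f k (fun d => x ⋖ d 0 ∧ p (Fin.cons x d)) := by
  unfold chainSum
  simp only [sum_filter, mul_sum]
  rw [← (Fin.consEquiv fun _ => P).sum_comp, Fintype.sum_prod_type]
  refine sum_congr rfl fun x _ => sum_congr rfl fun d _ => ?_
  simp [Fin.consEquiv, SatChain.cons_iff, List.ofFn_succ, and_assoc, and_left_comm]

theorem chainSum_eq_sum_head (f : P → ℝ) (k : ℕ) (q : P → Prop)
    (R : (Fin (k + 1) → P) → Prop) :
    chainSum f k (fun c => q (c 0) ∧ R c)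
      = ∑ y ∈ univ.filter q, chainSum f k (fun c => c 0 = y ∧ R c) := by
  unfold chainSum
  rw [← sum_fiberwise_of_maps_to (g := fun c => c 0) (t := univ.filter q)
    (fun c hc => by simp only [mem_filter] at hc ⊢; exact ⟨mem_univ _, hc.2.2.1⟩)]
  refine sum_congr rfl fun y hy => sum_congr ?_ fun _ _ => rfl
  ext c
  simp only [mem_filter, mem_univ, true_and] at hy ⊢
  constructor
  · rintro ⟨⟨hc, -, hR⟩, rfl⟩
    exact ⟨hc, rfl, hR⟩
  · rintro ⟨hc, rfl, hR⟩
    exact ⟨⟨hc, hy, hR⟩, rfl⟩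

theorem chainSum_head_zero (f : P → ℝ) (x : P) (Q : (Fin 1 → P) → Prop) :
    chainSum f 0 (fun c => c 0 = x ∧ Q c) = if Q (fun _ => x) then f x else 0 := by
  rw [chainSum_zero, sum_filter, sum_eq_single x] <;> simp +contextual

theorem chainSum_head_succ (f : P → ℝ) (k : ℕ) (x : P) (Q : (Fin (k + 2) → P) → Prop) :
    chainSum f (k + 1) (fun c => c 0 = x ∧ Q c)
      = f x * ∑ y ∈ univ.filter (fun y => x ⋖ y),
          chainSum f k (fun d => d 0 = y ∧ Q (Fin.cons x d)) := by
  rw [chainSum_succ, sum_eq_single x, ← chainSum_eq_sum_head]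
  · simp only [Fin.cons_zero, true_and]
  · exact fun z _ hzx =>
      mul_eq_zero_of_right _ (chainSum_eq_zero_of_forall_not fun _ _ h => hzx h.2.1)
  · simp

theorem deltaInvMap_eq_sum_range {M : ℕ} (hM : Fintype.card P ≤ M) (f : P → ℝ) (x : P) :
    deltaInvMap f x
      = ∑ k ∈ range M, chainSum f k (fun c => c 0 = x ∧ IsMax (c (Fin.last k))) := by
  have hdef : deltaInvMap f x = ∑ k ∈ range (Fintype.card P),
      chainSum f k (fun c => c 0 = x ∧ IsMax (c (Fin.last k))) := by
    simp only [deltaInvMap, chainSum]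
  rw [hdef]
  exact sum_subset (range_subset_range.2 hM) fun k _ hk =>
    chainSum_eq_zero_of_card_le f _ (by simpa using hk)

theorem deltaInvMap_rec (f : P → ℝ) (x : P) :
    deltaInvMap f x = f x * ((if IsMax x then 1 else 0)
      + ∑ y ∈ univ.filter (fun y => x ⋖ y), deltaInvMap f y) := by
  rw [deltaInvMap_eq_sum_range (Nat.le_succ _), sum_range_succ']
  simp only [chainSum_head_succ, Fin.cons_last, chainSum_head_zero, ← mul_sum]
  rw [sum_comm]
  simp only [← deltaInvMap_eq_sum_range le_rfl]
  split_ifs <;> ring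

theorem deltaInvMap_pos {f : P → ℝ} (hf : ∀ x, 0 < f x) (x : P) : 0 < deltaInvMap f x := by
  induction x using (Finite.to_wellFoundedGT (α := P)).wf.induction with
  | _ x ih =>
    have hsum : 0 ≤ ∑ y ∈ univ.filter (fun y => x ⋖ y), deltaInvMap f y :=
      sum_nonneg fun y hy => (ih y (mem_filter.1 hy).2.lt).le
    rw [deltaInvMap_rec]
    refine mul_pos (hf x) ?_
    by_cases hx : IsMax x
    · rw [if_pos hx]
      linarith
    · obtain ⟨y, hxy⟩ := exists_covBy_of_wellFoundedLT hx
      rw [if_neg hx, zero_add]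
      exact sum_pos (fun y hy => ih y (mem_filter.1 hy).2.lt) ⟨y, by simpa using hxy⟩

theorem deltaInvMap_congr {f f' : P → ℝ} {x : P} (h : ∀ y, x ≤ y → f y = f' y) :
    deltaInvMap f x = deltaInvMap f' x := by
  refine sum_congr rfl fun k _ => sum_congr rfl fun c hc => ?_
  obtain ⟨-, hsat, rfl, -⟩ := mem_filter.1 hc
  simp only [List.prod_ofFn, Function.comp_apply]
  exact prod_congr rfl fun i _ => h _ (hsat.strictMono.monotone (Fin.zero_le i))

/-- `∇⁻¹` is `Δ⁻¹` of the dual poset: it sums label products over saturated chains from `0̂`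
up to `x`. For positive `f`, its recursion `nablaInvMap_rec` says `nablaMap (nablaInvMap f) = f`. -/
noncomputable def nablaInvMap (f : P → ℝ) (x : P) : ℝ :=
  deltaInvMap (f ∘ OrderDual.ofDual) (OrderDual.toDual x)

theorem nablaInvMap_rec (f : P → ℝ) (x : P) :
    nablaInvMap f x = f x * ((if IsMin x then 1 else 0)
      + ∑ y ∈ univ.filter (fun y => y ⋖ x), nablaInvMap f y) := by
  rw [nablaInvMap, deltaInvMap_rec]
  congr 2
  exact sum_equiv OrderDual.ofDual (by simp [toDual_covBy_toDual_iff]) fun _ _ => rfl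

theorem nablaInvMap_pos {f : P → ℝ} (hf : ∀ x, 0 < f x) (x : P) : 0 < nablaInvMap f x :=
  deltaInvMap_pos (fun y => hf (OrderDual.ofDual y)) _

omit [Fintype P] in
theorem SatChain.toDual_comp_rev_iff {k : ℕ} {c : Fin (k + 1) → P} :
    SatChain (OrderDual.toDual ∘ c ∘ Fin.rev) ↔ SatChain c := by
  simp only [SatChain, Function.comp_apply, toDual_covBy_toDual_iff, Fin.rev_succ,
    Fin.rev_castSucc]
  exact ⟨fun h i => by simpa using h i.rev, fun h i => h i.rev⟩

theorem chainSum_eq_chainSum_orderDual (f : P → ℝ) (k : ℕ) (x : P) :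
    chainSum f k (fun c => IsMin (c 0) ∧ c (Fin.last k) = x)
      = chainSum (f ∘ OrderDual.ofDual) k
          (fun c => c 0 = OrderDual.toDual x ∧ IsMax (c (Fin.last k))) := by
  unfold chainSum
  refine sum_equiv (Fin.revPerm.arrowCongr OrderDual.toDual) ?_ ?_
  · intro c
    simp only [mem_filter, mem_univ, true_and]
    change _ ↔ SatChain (OrderDual.toDual ∘ c ∘ Fin.rev) ∧ _
    simp [SatChain.toDual_comp_rev_iff, and_comm]
  · intro c _
    rw [List.prod_ofFn, List.prod_ofFn]
    exact (Fintype.prod_equiv Fin.revPerm _ _ fun i => rfl).symm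

theorem nablaInvMap_eq_sum_range {M : ℕ} (hM : Fintype.card P ≤ M) (f : P → ℝ) (x : P) :
    nablaInvMap f x
      = ∑ k ∈ range M, chainSum f k (fun c => IsMin (c 0) ∧ c (Fin.last k) = x) := by
  rw [nablaInvMap, deltaInvMap_eq_sum_range ((Fintype.card_orderDual P).trans_le hM)]
  simp only [chainSum_eq_chainSum_orderDual]

theorem chainSum_head_through_zero_mul (g : P → ℝ) (v : P) (k : ℕ) (x : P) :
    chainSum g k (fun c => c 0 = x ∧ c 0 = v ∧ IsMax (c (Fin.last k))) * g v
      = chainSum g 0 (fun c => c 0 = x ∧ c (Fin.last 0) = v)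
          * chainSum g k (fun c => c 0 = v ∧ IsMax (c (Fin.last k))) := by
  rw [chainSum_head_zero]
  by_cases hxv : x = v
  · subst hxv
    rw [if_pos rfl, mul_comm]
    congr 1
    exact chainSum_congr_pred fun c _ => by simp
  · rw [if_neg hxv, zero_mul,
      chainSum_eq_zero_of_forall_not fun c _ h => hxv (h.1.symm.trans h.2.1), zero_mul]

theorem chainSum_head_through_mul (g : P → ℝ) (v : P) (k : ℕ) (j : Fin (k + 1)) (x : P) :
    chainSum g k (fun c => c 0 = x ∧ c j = v ∧ IsMax (c (Fin.last k))) * g v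
      = chainSum g j (fun c => c 0 = x ∧ c (Fin.last j) = v)
          * chainSum g (k - j) (fun c => c 0 = v ∧ IsMax (c (Fin.last (k - j)))) := by
  induction k generalizing x with
  | zero =>
    obtain rfl : j = 0 := Fin.fin_one_eq_zero j
    exact chainSum_head_through_zero_mul g v 0 x
  | succ k ih =>
    cases j using Fin.cases with
    | zero => exact chainSum_head_through_zero_mul g v (k + 1) x
    | succ j =>
      rw [Fin.val_succ, Nat.add_sub_add_right, chainSum_head_succ, chainSum_head_succ]
      simp only [Fin.cons_succ, Fin.cons_last, mul_assoc, sum_mul, ← ih]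

theorem chainSum_through_mul (g : P → ℝ) (v : P) (k : ℕ) (j : Fin (k + 1)) :
    chainSum g k (fun c => IsMin (c 0) ∧ c j = v ∧ IsMax (c (Fin.last k))) * g v
      = chainSum g j (fun c => IsMin (c 0) ∧ c (Fin.last j) = v)
          * chainSum g (k - j) (fun c => c 0 = v ∧ IsMax (c (Fin.last (k - j)))) := by
  rw [chainSum_eq_sum_head g k IsMin, chainSum_eq_sum_head g j IsMin, sum_mul, sum_mul]
  exact sum_congr rfl fun x _ => chainSum_head_through_mul g v k j x

theorem upsilon_eq_sum (g : P → ℝ) (v : P) :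
    Upsilon g v = ∑ k ∈ range (Fintype.card P), ∑ j : Fin (k + 1),
      chainSum g k (fun c => IsMin (c 0) ∧ c j = v ∧ IsMax (c (Fin.last k))) := by
  refine sum_congr rfl fun k _ => ?_
  unfold chainSum
  rw [← sum_biUnion]
  · refine sum_congr ?_ fun _ _ => rfl
    ext c
    simp only [mem_filter, mem_univ, true_and, mem_biUnion]
    constructor
    · rintro ⟨⟨hc, hmin, hmax⟩, j, hj⟩
      exact ⟨j, hc, hmin, hj, hmax⟩
    · rintro ⟨j, hc, hmin, hj, hmax⟩
      exact ⟨⟨hc, hmin, hmax⟩, j, hj⟩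
  · intro i _ j _ hij
    refine disjoint_left.2 fun c hci hcj => hij ?_
    simp only [mem_filter] at hci hcj
    exact hci.2.1.strictMono.injective (hci.2.2.2.1.trans hcj.2.2.2.1.symm)

theorem chainSum_mul_chainSum_eq_zero (g : P → ℝ) (v : P) {a b : ℕ}
    (hab : Fintype.card P ≤ a + b) :
    chainSum g a (fun c => IsMin (c 0) ∧ c (Fin.last a) = v)
      * chainSum g b (fun c => c 0 = v ∧ IsMax (c (Fin.last b))) = 0 := by
  have h := chainSum_through_mul g v (a + b) ⟨a, by omega⟩
  rw [chainSum_eq_zero_of_card_le _ _ hab, zero_mul, Nat.add_sub_cancel_left] at h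
  exact h.symm

theorem upsilon_mul_eq_nablaInvMap_mul_deltaInvMap (g : P → ℝ) (v : P) :
    Upsilon g v * g v = nablaInvMap g v * deltaInvMap g v := by
  set N := Fintype.card P
  set A : ℕ → ℝ := fun a => chainSum g a (fun c => IsMin (c 0) ∧ c (Fin.last a) = v)
  set B : ℕ → ℝ := fun b => chainSum g b (fun c => c 0 = v ∧ IsMax (c (Fin.last b)))
  calc Upsilon g v * g v = ∑ k ∈ range N, ∑ a ∈ range (k + 1), A a * B (k - a) := by
        rw [upsilon_eq_sum, sum_mul]
        refine sum_congr rfl fun k _ => ?_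
        rw [sum_mul, ← Fin.sum_univ_eq_sum_range (fun a => A a * B (k - a))]
        exact sum_congr rfl fun j _ => chainSum_through_mul g v k j
    _ = ∑ a ∈ range N, ∑ b ∈ range (N - a), A a * B b :=
        sum_range_diag_flip N fun a b => A a * B b
    _ = ∑ a ∈ range N, ∑ b ∈ range N, A a * B b :=
        sum_congr rfl fun a _ => sum_subset (range_subset_range.2 (Nat.sub_le N a))
          fun b _ hb => chainSum_mul_chainSum_eq_zero g v (by rw [mem_range] at hb; omega)
    _ = nablaInvMap g v * deltaInvMap g v := by
        rw [← sum_mul_sum, nablaInvMap_eq_sum_range le_rfl, deltaInvMap_eq_sum_range le_rfl]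

section Toggle

variable {C : ℝ}

theorem otog_apply_of_ne {v x : P} (f : P → ℝ) (hx : x ≠ v) : otog C v f x = f x :=
  if_neg hx

theorem lowSum_eq_of_covBy {f g : P → ℝ} {a : P} (hg : g a ≠ 0)
    (hlow : ∀ y, y ⋖ a → f y = nablaInvMap g y) : lowSum f a = nablaInvMap g a / g a := by
  rw [nablaInvMap_rec, mul_div_cancel_left₀ _ hg, lowSum]
  exact congrArg _ (sum_congr rfl fun y hy => hlow y (mem_filter.1 hy).2)

theorem upInvSum_eq_of_covBy {f h : P → ℝ} {a : P} (hh : h a ≠ 0)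
    (hup : ∀ y, a ⋖ y → f y = C / deltaInvMap h y) :
    upInvSum C f a = deltaInvMap h a / (h a * C) := by
  rw [deltaInvMap_rec, mul_div_mul_left _ _ hh, upInvSum, add_div, sum_div]
  congr 1
  · split_ifs <;> simp
  · exact sum_congr rfl fun y hy => by rw [hup y (mem_filter.1 hy).2, one_div_div]

theorem otog_apply_self_of_covBy {f g h : P → ℝ} {a : P} (hga : g a = h a) (hg : g a ≠ 0)
    (hlow : ∀ y, y ⋖ a → f y = nablaInvMap g y)
    (hup : ∀ y, a ⋖ y → f y = C / deltaInvMap h y) :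
    otog C a f a = C * nablaInvMap g a / (deltaInvMap h a * f a) := by
  rw [otog, if_pos rfl, lowSum_eq_of_covBy hg hlow, upInvSum_eq_of_covBy (hga ▸ hg) hup, ← hga]
  field_simp

omit [Fintype P] in
theorem IsLowerSet.mem_of_covBy_of_insert {S : Set P} {a y : P} (haS : IsLowerSet (insert a S))
    (hya : y ⋖ a) : y ∈ S :=
  (haS hya.le (Set.mem_insert a S)).resolve_left hya.ne

/-- The labelings the toggle sequence passes through: `∇⁻¹ g` on the order ideal `S` of
elements already toggled, `Θ (Δ⁻¹ h)` elsewhere. -/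
noncomputable def splitLabeling (C : ℝ) (g h : P → ℝ) (S : Set P) (x : P) : ℝ :=
  if x ∈ S then nablaInvMap g x else thetaMap C (deltaInvMap h) x

theorem splitLabeling_of_mem {g h : P → ℝ} {S : Set P} {x : P} (hx : x ∈ S) :
    splitLabeling C g h S x = nablaInvMap g x :=
  if_pos hx

theorem splitLabeling_of_notMem {g h : P → ℝ} {S : Set P} {x : P} (hx : x ∉ S) :
    splitLabeling C g h S x = C / deltaInvMap h x :=
  if_neg hx

theorem splitLabeling_empty (C : ℝ) (g h : P → ℝ) :
    splitLabeling C g h ∅ = thetaMap C (deltaInvMap h) :=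
  funext fun _ => if_neg (Set.notMem_empty _)

theorem otog_splitLabeling_insert (hC : C ≠ 0) {g : P → ℝ} (hg : ∀ x, 0 < g x) {S : Set P}
    {a : P} (ha : a ∉ S) (hS : IsLowerSet S) (haS : IsLowerSet (insert a S)) :
    otog C a (splitLabeling C g g S) = splitLabeling C g g (insert a S) := by
  funext x
  rcases eq_or_ne x a with rfl | hx
  · have hF := (deltaInvMap_pos hg x).ne'
    rw [otog_apply_self_of_covBy rfl (hg x).ne'
      (fun y hy => splitLabeling_of_mem (haS.mem_of_covBy_of_insert hy))
      (fun y hy => splitLabeling_of_notMem fun hyS => ha (hS hy.le hyS))]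
    simp only [splitLabeling, ha, Set.mem_insert, if_false, if_true, thetaMap]
    field_simp
  · simp [otog_apply_of_ne _ hx, splitLabeling, hx]

theorem otog_splitLabeling_insert_of_eq {g h : P → ℝ} (hg : ∀ x, 0 < g x) {S : Set P} {a : P}
    (hga : g a = h a) (ha : a ∉ S) (hS : IsLowerSet S) (haS : IsLowerSet (insert a S)) :
    otog C a (splitLabeling C g h (insert a S)) = splitLabeling C g h S := by
  funext x
  rcases eq_or_ne x a with rfl | hx
  · have hG := (nablaInvMap_pos hg x).ne'
    rw [otog_apply_self_of_covBy hga (hg x).ne'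
      (fun y hy => splitLabeling_of_mem (Set.mem_insert_of_mem _ (haS.mem_of_covBy_of_insert hy)))
      (fun y hy => splitLabeling_of_notMem fun hyS => hyS.elim hy.ne' fun hyS => ha (hS hy.le hyS))]
    simp only [splitLabeling, ha, Set.mem_insert, if_false, if_true, thetaMap]
    field_simp
  · simp [otog_apply_of_ne _ hx, splitLabeling, hx]

theorem deltaInvMap_atog_of_not_le (g : P → ℝ) {v x : P} (hx : ¬ x ≤ v) :
    deltaInvMap (atog C v g) x = deltaInvMap g x :=
  deltaInvMap_congr fun y hxy => if_neg fun (hyv : y = v) => hx (hyv ▸ hxy)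

theorem deltaInvMap_atog_self {g : P → ℝ} (hg : ∀ x, 0 < g x) (v : P) :
    deltaInvMap (atog C v g) v = C / nablaInvMap g v := by
  set X := (if IsMax v then 1 else 0) + ∑ y ∈ univ.filter (fun y => v ⋖ y), deltaInvMap g y
    with hX_def
  have hF : deltaInvMap g v = g v * X := deltaInvMap_rec g v
  have hX : X ≠ 0 := right_ne_zero_of_mul (hF ▸ (deltaInvMap_pos hg v).ne')
  have hΥ : Upsilon g v = nablaInvMap g v * X := by
    have := upsilon_mul_eq_nablaInvMap_mul_deltaInvMap g v
    rw [hF] at this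
    exact mul_right_cancel₀ (hg v).ne' (by rw [this]; ring)
  have hsum : ∑ y ∈ univ.filter (fun y => v ⋖ y), deltaInvMap (atog C v g) y
      = ∑ y ∈ univ.filter (fun y => v ⋖ y), deltaInvMap g y :=
    sum_congr rfl fun y hy => deltaInvMap_atog_of_not_le g (mem_filter.1 hy).2.lt.not_ge
  rw [deltaInvMap_rec, atog, if_pos rfl, hsum, ← hX_def, hΥ]
  field_simp

theorem otog_splitLabeling_Iio (hC : C ≠ 0) {g : P → ℝ} (hg : ∀ x, 0 < g x) (v : P) :
    otog C v (splitLabeling C g g (Set.Iio v)) = splitLabeling C g (atog C v g) (Set.Iio v) := by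
  funext x
  rcases eq_or_ne x v with rfl | hx
  · have hF := (deltaInvMap_pos hg x).ne'
    rw [otog_apply_self_of_covBy (f := splitLabeling C g g (Set.Iio x)) rfl (hg x).ne'
      (fun y hy => splitLabeling_of_mem hy.lt)
      (fun y hy => splitLabeling_of_notMem (lt_asymm hy.lt))]
    simp only [splitLabeling, Set.mem_Iio, lt_irrefl, if_false, thetaMap,
      deltaInvMap_atog_self hg]
    field_simp
  · rw [otog_apply_of_ne _ hx]
    by_cases hxv : x < v
    · simp [splitLabeling, hxv]
    · have hnle : ¬ x ≤ v := fun h => hxv (h.lt_of_ne hx)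
      simp [splitLabeling, hxv, thetaMap, deltaInvMap_atog_of_not_le g hnle]

omit [Fintype P] in
theorem IsLinearExtensionOn.pairwise {A : Set P} {l : List P} (hl : IsLinearExtensionOn A l) :
    l.Pairwise (fun x y => ¬ y ≤ x) := by
  rw [List.pairwise_iff_getElem]
  intro i j hi hj hij hji
  rcases hji.lt_or_eq with hlt | heq
  · exact absurd (hl.2.2 j i hj hi hlt) (by omega)
  · exact hij.ne ((hl.1.getElem_inj_iff).1 heq.symm)

omit [Fintype P] in
theorem IsLowerSet.insert_of_cons {S : Set P} {a : P} {l : List P}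
    (hl : (a :: l).Pairwise (fun x y => ¬ y ≤ x)) (hS : IsLowerSet S)
    (hSl : IsLowerSet (S ∪ {x | x ∈ a :: l})) : IsLowerSet (insert a S) := by
  rintro x y hyx (rfl | hx)
  · rcases hyx.eq_or_lt with rfl | hlt
    · exact Set.mem_insert _ _
    · rcases hSl hyx (Or.inr List.mem_cons_self) with hy | hy
      · exact Or.inr hy
      · rcases List.mem_cons.1 hy with rfl | hy
        · exact absurd hlt (lt_irrefl _)
        · exact absurd hyx (List.rel_of_pairwise_cons hl hy)
  · exact Or.inr (hS hyx hx)

omit [Fintype P] [PartialOrder P] in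
theorem union_setOf_mem_cons (S : Set P) (a : P) (l : List P) :
    S ∪ {x | x ∈ a :: l} = insert a S ∪ {x | x ∈ l} := by
  ext x
  simp only [Set.mem_union, Set.mem_ofPred_eq, List.mem_cons, Set.mem_insert_iff]
  tauto

theorem applyOTogs_splitLabeling (hC : C ≠ 0) {g : P → ℝ} (hg : ∀ x, 0 < g x) {S : Set P}
    {l : List P} (hl : l.Pairwise (fun x y => ¬ y ≤ x)) (hS : IsLowerSet S)
    (hSl : IsLowerSet (S ∪ {x | x ∈ l})) (hdisj : ∀ a ∈ l, a ∉ S) :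
    applyOTogs C l (splitLabeling C g g S) = splitLabeling C g g (S ∪ {x | x ∈ l}) := by
  induction l generalizing S with
  | nil => simp [applyOTogs]
  | cons a l ih =>
    have haS := hS.insert_of_cons hl hSl
    rw [union_setOf_mem_cons] at hSl ⊢
    change applyOTogs C l (otog C a _) = _
    rw [otog_splitLabeling_insert hC hg (hdisj a List.mem_cons_self) hS haS]
    refine ih hl.of_cons haS hSl fun b hb hbS => ?_
    rcases hbS with rfl | hbS
    · exact List.rel_of_pairwise_cons hl hb le_rfl
    · exact hdisj b (List.mem_cons_of_mem a hb) hbS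

theorem foldr_otog_splitLabeling {g h : P → ℝ} (hg : ∀ x, 0 < g x) {S : Set P} {l : List P}
    (hl : l.Pairwise (fun x y => ¬ y ≤ x)) (hS : IsLowerSet S)
    (hSl : IsLowerSet (S ∪ {x | x ∈ l})) (hdisj : ∀ a ∈ l, a ∉ S)
    (hgh : ∀ a ∈ l, g a = h a) :
    l.foldr (fun w f => otog C w f) (splitLabeling C g h (S ∪ {x | x ∈ l}))
      = splitLabeling C g h S := by
  induction l generalizing S with
  | nil => simp
  | cons a l ih =>
    have haS := hS.insert_of_cons hl hSl
    rw [union_setOf_mem_cons] at hSl ⊢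
    rw [List.foldr_cons, ih hl.of_cons haS hSl ?_ fun b hb => hgh b (List.mem_cons_of_mem a hb),
      otog_splitLabeling_insert_of_eq hg (hgh a List.mem_cons_self) (hdisj a List.mem_cons_self)
        hS haS]
    rintro b hb (rfl | hbS)
    · exact List.rel_of_pairwise_cons hl hb le_rfl
    · exact hdisj b (List.mem_cons_of_mem a hb) hbS

end Toggle

-- `applyOTogs C le` is `η_v⁻¹` (it applies `T_{x₁}` first) and `le.foldr` is `η_v`.
/-- Let `v ∈ P` and let `le = (x₁,…,x_k)` be a linear extension of the
subposet `{x ∈ P : x < v}`.  With `η_v = T_{x₁} ∘ T_{x₂} ∘ ⋯ ∘ T_{x_k}` (so `η_v⁻¹ =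
T_{x_k} ∘ ⋯ ∘ T_{x₁}`, each `T` being an involution on positive labelings) and
`τ_v* = η_v ∘ T_v ∘ η_v⁻¹`, we have `Θ ∘ Δ⁻¹ ∘ τ_v = τ_v* ∘ Θ ∘ Δ⁻¹` on positive
labelings.  Below, `η_v⁻¹` is realized by `applyOTogs C le` (apply `T_{x₁}` first) and
`η_v` by `le.foldr` (apply `T_{x_k}` first). -/
theorem theta_deltaInv_atog_eq_tauStar (C : ℝ) (hC : 0 < C) (v : P)
    (le : List P) (hle : IsLinearExtensionOn {x : P | x < v} le)
    (g : P → ℝ) (hg : ∀ x, 0 < g x) :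
    thetaMap C (deltaInvMap (atog C v g))
      = le.foldr (fun w h => otog C w h)
          (otog C v (applyOTogs C le (thetaMap C (deltaInvMap g)))) := by
  have hl := hle.pairwise
  have hIio : ∅ ∪ {x | x ∈ le} = Set.Iio v := by
    ext x
    simp [hle.2.1 x]
  have hlower : IsLowerSet (∅ ∪ {x | x ∈ le}) := hIio ▸ isLowerSet_Iio v
  have hdisj : ∀ a ∈ le, a ∉ (∅ : Set P) := fun _ _ => Set.notMem_empty _
  have hforward : applyOTogs C le (thetaMap C (deltaInvMap g))
      = splitLabeling C g g (Set.Iio v) := by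
    rw [← splitLabeling_empty C g g,
      applyOTogs_splitLabeling hC.ne' hg hl isLowerSet_empty hlower hdisj, hIio]
  have hbackward : le.foldr (fun w h => otog C w h) (splitLabeling C g (atog C v g) (Set.Iio v))
      = thetaMap C (deltaInvMap (atog C v g)) := by
    rw [← hIio, foldr_otog_splitLabeling (h := atog C v g) hg hl isLowerSet_empty hlower hdisj
      (fun a ha => (if_neg ((hle.2.1 a).1 ha).ne).symm), splitLabeling_empty]
  rw [hforward, otog_splitLabeling_Iio hC.ne' hg, hbackward]
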